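/- If H is a dissolution of G, then bcg(H) = bcg(G), where bcg(F) denotes the maximum k for which the uniformly triangulated grid Γ_k is a contraction of F. -/

import Mathlib

open SimpleGraph

universe u

/-- A set `S` is a connected set of `G` if the induced subgraph is connected. -/
def ConnSet {V : Type u} (G : SimpleGraph V) (S : Set V) : Prop :=
  (G.induce S).Connected

/-- `σ` witnesses that `H` is a contraction of `G`: `σ` is surjective, every fiber
induces a connected nonempty subgraph, and `H.Adj x y` iff the union of the fibers
of `x` and `y` induces a connected subgraph. -/
def IsContractionMap {V : Type u} {W : Type*} (G : SimpleGraph V) (H : SimpleGraph W)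
    (σ : V → W) : Prop :=
  Function.Surjective σ ∧
  (∀ x : W, ConnSet G (σ ⁻¹' {x})) ∧
  (∀ x y : W, x ≠ y → (H.Adj x y ↔ ConnSet G (σ ⁻¹' {x} ∪ σ ⁻¹' {y})))

/-- `H` is a contraction of `G`. -/
def IsContraction {W : Type*} {V : Type u} (H : SimpleGraph W) (G : SimpleGraph V) : Prop :=
  ∃ σ : V → W, IsContractionMap G H σ

/-- The set `S` has diameter at most `c` in `G` (distances measured in `G[S]`). -/
def DiamLE {V : Type u} (G : SimpleGraph V) (S : Set V) (c : ℕ) : Prop :=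
  ∀ u v : S, (G.induce S).dist u v ≤ c

/-- `H` is a `c`-size contraction of `G`: all fibers have at most `c` vertices. -/
def IsSizeContraction {W : Type*} {V : Type u} (H : SimpleGraph W) (G : SimpleGraph V)
    (c : ℕ) : Prop :=
  ∃ σ : V → W, IsContractionMap G H σ ∧ ∀ x : W, (σ ⁻¹' {x}).ncard ≤ c

/-- `H` is a `c`-diameter contraction of `G`: all fibers have diameter at most `c`. -/
def IsDiamContraction {W : Type*} {V : Type u} (H : SimpleGraph W) (G : SimpleGraph V)
    (c : ℕ) : Prop :=
  ∃ σ : V → W, IsContractionMap G H σ ∧ ∀ x : W, DiamLE G (σ ⁻¹' {x}) c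

/-- `H` is a minor of `G`: `H` is a contraction of a subgraph of `G`. -/
def IsMinor {W : Type*} {V : Type u} (H : SimpleGraph W) (G : SimpleGraph V) : Prop :=
  ∃ (S : Set V) (G' : SimpleGraph S),
    (∀ a b : S, G'.Adj a b → G.Adj a.val b.val) ∧ IsContraction H G'

/-- A tree-decomposition of `G`. -/
structure TreeDecomp {V : Type u} (G : SimpleGraph V) where
  ι : Type u
  T : SimpleGraph ι
  isTree : T.IsTree
  bag : ι → Set V
  mem_bag : ∀ v : V, ∃ t, v ∈ bag t
  edge_bag : ∀ ⦃u v : V⦄, G.Adj u v → ∃ t, u ∈ bag t ∧ v ∈ bag t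
  conn_bag : ∀ v : V, ConnSet T {t | v ∈ bag t}

/-- `G` has treewidth at most `k`. -/
def TwLE {V : Type u} (G : SimpleGraph V) (k : ℕ) : Prop :=
  ∃ D : TreeDecomp G, ∀ t, (D.bag t).ncard ≤ k + 1

/-- The treewidth of `G`. -/
noncomputable def tw {V : Type u} (G : SimpleGraph V) : ℕ :=
  sInf {k | TwLE G k}

/-- Boundary vertices of the `(k × k)`-grid. -/
def Boundary (k : ℕ) (q : Fin k × Fin k) : Prop :=
  q.1.val = 0 ∨ q.1.val = k - 1 ∨ q.2.val = 0 ∨ q.2.val = k - 1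

/-- The base relation of the uniformly triangulated grid `Γ_k`: grid edges,
diagonal edges, and edges from the corner `(k-1,k-1)` to all boundary vertices. -/
def triGridRel (k : ℕ) (p q : Fin k × Fin k) : Prop :=
  (p.1 = q.1 ∧ p.2.val + 1 = q.2.val) ∨
  (p.2 = q.2 ∧ p.1.val + 1 = q.1.val) ∨
  (p.1.val = q.1.val + 1 ∧ q.2.val = p.2.val + 1) ∨
  (p.1.val = k - 1 ∧ p.2.val = k - 1 ∧ Boundary k q)

/-- The uniformly triangulated grid `Γ_k`. -/
def triGrid (k : ℕ) : SimpleGraph (Fin k × Fin k) :=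
  SimpleGraph.fromRel (triGridRel k)

/-- `bcg G` is the maximum `k` such that `Γ_k` is a contraction of `G`. -/
noncomputable def bcg {V : Type u} (G : SimpleGraph V) : ℕ :=
  sSup {k | IsContraction (triGrid k) G}

/-- The graph obtained from `G` by dissolving the degree-2 vertex `v` with
neighbors `x` and `y`. -/
def dissolve {V : Type u} (G : SimpleGraph V) (v x y : V) :
    SimpleGraph {u : V // u ≠ v} :=
  SimpleGraph.fromRel (fun a b => G.Adj a.val b.val ∨ (a.val = x ∧ b.val = y))

/-- Bundled finite simple graphs. -/
structure BGraph : Type 1 where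
  V : Type
  [fintypeV : Fintype V]
  G : SimpleGraph V

attribute [instance] BGraph.fintypeV

/-- `B` is obtained from `A` by dissolving one degree-2 vertex. -/
def DissolveStep (A B : BGraph) : Prop :=
  ∃ (v x y : A.V), x ≠ y ∧ A.G.neighborSet v = {x, y} ∧
    Nonempty (B.G ≃g dissolve A.G v x y)

/-- `B` is a dissolution of `A` (a finite sequence of dissolutions of degree-2 vertices). -/
def IsDissolution (A B : BGraph) : Prop :=
  Relation.ReflTransGen DissolveStep A B

/-!
Dissolving a vertex `v` with neighbours `x, y` is the same as contracting the edge `vx`.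
A `Γ_k`-contraction `σ` of the dissolved graph therefore extends to the original one by
`σ v := σ x`. Conversely, a `Γ_k`-contraction `σ` of the original graph already puts `v` in the
fibre of `x` or of `y`: otherwise the fibre of `v` is `{v}` and `σ v` would have at most the two
neighbours `σ x, σ y`, while every vertex of `Γ_k` (`k ≥ 2`) has three. In both directions the
fibres and unions of two fibres containing `v` also contain `x` (say), and for such sets
connectivity is the same before and after dissolving.
-/

theorem SimpleGraph.Connected.of_adj_reachable {α β : Type*} {G : SimpleGraph α}
    {G' : SimpleGraph β} (f : α → β) (hadj : ∀ a b, G.Adj a b → G'.Reachable (f a) (f b))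
    (hcover : ∀ b, ∃ a, G'.Reachable (f a) b) (h : G.Connected) : G'.Connected := by
  have hreach : ∀ a b, G.Reachable a b → G'.Reachable (f a) (f b) := by
    intro a b hab
    rw [reachable_iff_reflTransGen] at hab ⊢
    exact hab.lift' f fun a b h => (reachable_iff_reflTransGen _ _).mp (hadj a b h)
  obtain ⟨a₀⟩ := h.nonempty
  refine (connected_iff_exists_forall_reachable G').mpr ⟨f a₀, fun b => ?_⟩
  obtain ⟨a, ha⟩ := hcover b
  exact (hreach a₀ a (h a₀ a)).trans ha

theorem ConnSet.exists_adj_mem {V : Type u} {G : SimpleGraph V} {S : Set V} {v w : V}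
    (h : ConnSet G S) (hv : v ∈ S) (hw : w ∈ S) (hvw : v ≠ w) : ∃ u ∈ S, G.Adj v u := by
  obtain ⟨p⟩ := h.preconnected ⟨v, hv⟩ ⟨w, hw⟩
  have hp : ¬ p.Nil := Walk.not_nil_of_ne fun h => hvw (congrArg Subtype.val h)
  exact ⟨p.snd.1, p.snd.2, p.adj_snd hp⟩

theorem connSet_preimage_iso {V V' : Type*} {G : SimpleGraph V} {G' : SimpleGraph V'}
    (e : G ≃g G') (S : Set V') : ConnSet G (e ⁻¹' S) ↔ ConnSet G' S :=
  (e.induce e.bijective.bijOn_preimage).connected_iff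

section Contraction

variable {V V' W : Type*} {G : SimpleGraph V} {G' : SimpleGraph V'} {H : SimpleGraph W}

theorem IsContractionMap.of_connSet_iff {σ : V → W} {σ' : V' → W} (hσ : IsContractionMap G H σ)
    (hsurj : Function.Surjective σ')
    (hconn : ∀ T : Set W, ConnSet G' (σ' ⁻¹' T) ↔ ConnSet G (σ ⁻¹' T)) :
    IsContractionMap G' H σ' := by
  refine ⟨hsurj, fun s => (hconn {s}).mpr (hσ.2.1 s), fun s r hsr => ?_⟩
  rw [hσ.2.2 s r hsr, ← Set.preimage_union, ← Set.preimage_union, hconn]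

theorem IsContraction.of_iso (e : G ≃g G') (h : IsContraction H G') : IsContraction H G := by
  obtain ⟨σ, hσ⟩ := h
  exact ⟨σ ∘ e, hσ.of_connSet_iff (hσ.1.comp e.surjective)
    fun T => connSet_preimage_iso e (σ ⁻¹' T)⟩

theorem isContraction_congr (e : G ≃g G') : IsContraction H G ↔ IsContraction H G' :=
  ⟨IsContraction.of_iso e.symm, IsContraction.of_iso e⟩

theorem IsContractionMap.map_mem_image_neighborSet {σ : V → W} (hσ : IsContractionMap G H σ)
    (v : V) : σ v ∈ σ '' G.neighborSet v ∨ H.neighborSet (σ v) ⊆ σ '' G.neighborSet v := by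
  by_cases hfib : ∃ w, w ≠ v ∧ σ w = σ v
  · obtain ⟨w, hwv, hw⟩ := hfib
    obtain ⟨u, hu, hvu⟩ := (hσ.2.1 (σ v)).exists_adj_mem rfl hw hwv.symm
    exact Or.inl ⟨u, hvu, hu⟩
  · push Not at hfib
    refine Or.inr fun s hs => ?_
    obtain ⟨w, rfl⟩ := hσ.1 s
    have hconn := (hσ.2.2 _ _ hs.ne).mp hs
    obtain ⟨u, hu | hu, hvu⟩ := hconn.exists_adj_mem (Or.inl rfl) (Or.inr rfl)
      fun h => hs.ne (congrArg σ h)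
    · exact absurd hu (hfib u hvu.ne')
    · exact ⟨u, hvu, hu⟩

end Contraction

section TriGrid

variable {k : ℕ}

theorem triGrid_adj_of_fst_succ {a a' b : Fin k} (h : a.val + 1 = a'.val ∨ a'.val + 1 = a.val) :
    (triGrid k).Adj (a, b) (a', b) := by
  simp only [triGrid, fromRel_adj, triGridRel, Boundary, ne_eq, Prod.ext_iff, Fin.ext_iff,
    true_and, and_true]
  omega

theorem triGrid_adj_of_snd_succ {a b b' : Fin k} (h : b.val + 1 = b'.val ∨ b'.val + 1 = b.val) :
    (triGrid k).Adj (a, b) (a, b') := by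
  simp only [triGrid, fromRel_adj, triGridRel, Boundary, ne_eq, Prod.ext_iff, Fin.ext_iff,
    true_and]
  omega

theorem triGrid_adj_corner {c t : Fin k × Fin k} (hc : c.1.val = k - 1 ∧ c.2.val = k - 1)
    (ht : Boundary k t) (hct : c ≠ t) : (triGrid k).Adj c t := by
  simp only [triGrid, fromRel_adj, triGridRel]
  exact ⟨hct, Or.inl (Or.inr (Or.inr (Or.inr ⟨hc.1, hc.2, ht⟩)))⟩

theorem triGrid_exists_three_adj (hk : 2 ≤ k) (t : Fin k × Fin k) :
    ∃ a b c, a ≠ b ∧ a ≠ c ∧ b ≠ c ∧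
      (triGrid k).Adj t a ∧ (triGrid k).Adj t b ∧ (triGrid k).Adj t c := by
  obtain rfl | hk3 := hk.eq_or_lt
  · -- `Γ₂` is the complete graph on four vertices.
    simp only [triGrid, fromRel_adj, triGridRel, Boundary]
    revert t
    set_option synthInstance.maxSize 1000 in decide
  have hstep : ∀ i < k, ∃ i' < k - 1, i' + 1 = i ∨ i + 1 = i' := fun i _ =>
    ⟨if i = 0 then 1 else i - 1, by split <;> omega, by split <;> omega⟩
  obtain ⟨⟨i, hi⟩, ⟨j, hj⟩⟩ := t
  have hne {p q : Fin k × Fin k} (h : p.1.val ≠ q.1.val ∨ p.2.val ≠ q.2.val) : p ≠ q := by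
    simpa only [ne_eq, Prod.ext_iff, Fin.ext_iff, not_and_or] using h
  by_cases hc : i = k - 1 ∧ j = k - 1
  · refine ⟨(⟨0, by omega⟩, ⟨0, by omega⟩), (⟨0, by omega⟩, ⟨k - 1, by omega⟩),
      (⟨k - 1, by omega⟩, ⟨0, by omega⟩), hne ?_, hne ?_, hne ?_, triGrid_adj_corner hc ?_ (hne ?_),
      triGrid_adj_corner hc ?_ (hne ?_), triGrid_adj_corner hc ?_ (hne ?_)⟩ <;>
      simp [Boundary] <;> omega
  by_cases hb : Boundary k (⟨i, hi⟩, ⟨j, hj⟩)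
  · obtain ⟨i', hi', hii'⟩ := hstep i hi
    obtain ⟨j', hj', hjj'⟩ := hstep j hj
    refine ⟨(⟨i', by omega⟩, ⟨j, hj⟩), (⟨i, hi⟩, ⟨j', by omega⟩),
      (⟨k - 1, by omega⟩, ⟨k - 1, by omega⟩),
      hne ?_, hne ?_, hne ?_, triGrid_adj_of_fst_succ ?_, triGrid_adj_of_snd_succ ?_,
      (triGrid_adj_corner ⟨rfl, rfl⟩ hb (hne ?_)).symm⟩ <;> simp <;> omega
  · simp only [Boundary, not_or] at hb
    refine ⟨(⟨i - 1, by omega⟩, ⟨j, hj⟩), (⟨i + 1, by omega⟩, ⟨j, hj⟩),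
      (⟨i, hi⟩, ⟨j - 1, by omega⟩),
      hne ?_, hne ?_, hne ?_, triGrid_adj_of_fst_succ ?_, triGrid_adj_of_fst_succ ?_,
      triGrid_adj_of_snd_succ ?_⟩ <;> simp <;> omega

theorem triGrid_neighborSet_not_subset_pair (hk : 2 ≤ k) (t p q : Fin k × Fin k) :
    ¬ (triGrid k).neighborSet t ⊆ {p, q} := by
  intro h
  obtain ⟨a, b, c, hab, hac, hbc, ha, hb, hc⟩ := triGrid_exists_three_adj hk t
  rcases h ha with rfl | rfl <;> rcases h hb with rfl | rfl <;> rcases h hc with rfl | rfl <;>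
    contradiction

theorem IsContractionMap.triGrid_map_eq_or {V : Type*} {G : SimpleGraph V}
    {σ : V → Fin k × Fin k} (hσ : IsContractionMap G (triGrid k) σ) {v x y : V}
    (hN : G.neighborSet v = {x, y}) : σ v = σ x ∨ σ v = σ y := by
  obtain hk | hk := lt_or_ge k 2
  · have : Subsingleton (Fin k) := Fin.subsingleton_iff_le_one.mpr (by omega)
    exact Or.inl (Subsingleton.elim _ _)
  rcases hσ.map_mem_image_neighborSet v with h | h <;> rw [hN, Set.image_pair] at h
  · exact h
  · exact absurd h (triGrid_neighborSet_not_subset_pair hk _ _ _)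

end TriGrid

section Dissolve

variable {V : Type*} {A : SimpleGraph V} {v x y : V}

theorem adj_iff_of_neighborSet_eq_pair (hN : A.neighborSet v = {x, y}) (u : V) :
    A.Adj v u ↔ u = x ∨ u = y := by
  rw [← mem_neighborSet, hN, Set.mem_insert_iff, Set.mem_singleton_iff]

theorem dissolve_adj {a b : {u : V // u ≠ v}} :
    (dissolve A v x y).Adj a b ↔
      a ≠ b ∧ (A.Adj a b ∨ a.1 = x ∧ b.1 = y ∨ a.1 = y ∧ b.1 = x) := by
  simp only [dissolve, fromRel_adj, A.adj_comm b.1]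
  tauto

theorem dissolve_comm : dissolve A v x y = dissolve A v y x := by
  ext a b
  simp only [dissolve_adj]
  tauto

theorem ConnSet.of_dissolve (hN : A.neighborSet v = {x, y}) {S : Set V} (hS : v ∈ S ↔ x ∈ S)
    (h : ConnSet (dissolve A v x y) (Subtype.val ⁻¹' S)) : ConnSet A S := by
  have hvx : A.Adj v x := (adj_iff_of_neighborSet_eq_pair hN x).mpr (Or.inl rfl)
  have hvy : A.Adj v y := (adj_iff_of_neighborSet_eq_pair hN y).mpr (Or.inr rfl)
  refine h.of_adj_reachable (fun p => ⟨p.1.1, p.2⟩) ?_ ?_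
  · rintro ⟨⟨a, hav⟩, haS⟩ ⟨⟨b, hbv⟩, hbS⟩ hab
    have hab' : (dissolve A v x y).Adj ⟨a, hav⟩ ⟨b, hbv⟩ := hab
    rcases dissolve_adj.mp hab' with ⟨-, h | ⟨rfl, rfl⟩ | ⟨rfl, rfl⟩⟩
    · exact Adj.reachable h
    · exact (Adj.reachable (G := A.induce S) (u := ⟨a, haS⟩) (v := ⟨v, hS.mpr haS⟩)
        hvx.symm).trans (Adj.reachable hvy)
    · exact (Adj.reachable (G := A.induce S) (u := ⟨a, haS⟩) (v := ⟨v, hS.mpr hbS⟩)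
        hvy.symm).trans (Adj.reachable hvx)
  · rintro ⟨b, hb⟩
    by_cases hbv : b = v
    · subst hbv
      exact ⟨⟨⟨x, hvx.ne'⟩, hS.mp hb⟩, Adj.reachable hvx.symm⟩
    · exact ⟨⟨⟨b, hbv⟩, hb⟩, Reachable.rfl⟩

theorem ConnSet.to_dissolve (hN : A.neighborSet v = {x, y}) {S : Set V} (hS : v ∈ S → x ∈ S)
    (h : ConnSet A S) : ConnSet (dissolve A v x y) (Subtype.val ⁻¹' S) := by
  classical
  have hvx : A.Adj v x := (adj_iff_of_neighborSet_eq_pair hN x).mpr (Or.inl rfl)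
  let S' : Set {u : V // u ≠ v} := Subtype.val ⁻¹' S
  let f : S → S' := fun p =>
    if h : p.1 = v then ⟨⟨x, hvx.ne'⟩, hS (h ▸ p.2)⟩ else ⟨⟨p.1, h⟩, p.2⟩
  have hf_of_ne (p : S) (h : p.1 ≠ v) : f p = ⟨⟨p.1, h⟩, p.2⟩ := dif_neg h
  have hf_v (hv : v ∈ S) (b : V) (hb : b ∈ S) (hvb : A.Adj v b) :
      ((dissolve A v x y).induce S').Reachable (f ⟨v, hv⟩) (f ⟨b, hb⟩) := by
    rw [hf_of_ne ⟨b, hb⟩ hvb.ne', show f ⟨v, hv⟩ = ⟨⟨x, hvx.ne'⟩, hS hv⟩ from dif_pos rfl]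
    by_cases hbx : b = x
    · subst hbx
      rfl
    · refine Adj.reachable (dissolve_adj.mpr ⟨fun h => hbx (congrArg Subtype.val h).symm, ?_⟩)
      have := (adj_iff_of_neighborSet_eq_pair hN b).mp hvb
      tauto
  refine h.of_adj_reachable f ?_ fun p => ⟨⟨p.1.1, p.2⟩, by rw [hf_of_ne _ p.1.2]⟩
  rintro ⟨a, haS⟩ ⟨b, hbS⟩ hab
  by_cases hav : a = v
  · subst hav
    exact hf_v haS b hbS hab
  by_cases hbv : b = v
  · subst hbv
    exact (hf_v hbS a haS hab.symm).symm
  have hab' : A.Adj a b := hab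
  rw [hf_of_ne _ hav, hf_of_ne _ hbv]
  exact Adj.reachable (dissolve_adj.mpr ⟨fun h => hab'.ne (congrArg Subtype.val h), Or.inl hab'⟩)

theorem connSet_dissolve_iff (hN : A.neighborSet v = {x, y}) {S : Set V} (hS : v ∈ S ↔ x ∈ S) :
    ConnSet (dissolve A v x y) (Subtype.val ⁻¹' S) ↔ ConnSet A S :=
  ⟨ConnSet.of_dissolve hN hS, ConnSet.to_dissolve hN hS.mp⟩

theorem IsContractionMap.dissolve_comp_val {W : Type*} {H : SimpleGraph W} {σ : V → W}
    (hσ : IsContractionMap A H σ) (hN : A.neighborSet v = {x, y}) (hvx : σ v = σ x) :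
    IsContractionMap (dissolve A v x y) H (σ ∘ Subtype.val) := by
  have hxv : x ≠ v := ((adj_iff_of_neighborSet_eq_pair hN x).mpr (Or.inl rfl)).ne'
  refine hσ.of_connSet_iff (fun s => ?_) fun T =>
    connSet_dissolve_iff (S := σ ⁻¹' T) hN (by rw [Set.mem_preimage, Set.mem_preimage, hvx])
  obtain ⟨u, rfl⟩ := hσ.1 s
  by_cases huv : u = v
  · exact ⟨⟨x, hxv⟩, by simp [huv, hvx]⟩
  · exact ⟨⟨u, huv⟩, rfl⟩

theorem IsContraction.of_dissolve {W : Type*} {H : SimpleGraph W}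
    (h : IsContraction H (dissolve A v x y)) (hN : A.neighborSet v = {x, y}) :
    IsContraction H A := by
  classical
  obtain ⟨σ, hσ⟩ := h
  have hxv : x ≠ v := ((adj_iff_of_neighborSet_eq_pair hN x).mpr (Or.inl rfl)).ne'
  let τ : V → W := fun u => if h : u = v then σ ⟨x, hxv⟩ else σ ⟨u, h⟩
  have hτ (u : {u : V // u ≠ v}) : τ u = σ u := dif_neg u.2
  refine ⟨τ, hσ.of_connSet_iff (fun s => ?_) fun T => ?_⟩
  · obtain ⟨u, rfl⟩ := hσ.1 s
    exact ⟨u, hτ u⟩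
  · have hT : (Subtype.val ⁻¹' (τ ⁻¹' T) : Set {u : V // u ≠ v}) = σ ⁻¹' T := by
      ext u
      simp only [Set.mem_preimage, hτ]
    rw [← connSet_dissolve_iff hN, hT]
    rw [Set.mem_preimage, Set.mem_preimage, hτ ⟨x, hxv⟩, show τ v = σ ⟨x, hxv⟩ from dif_pos rfl]

theorem isContraction_triGrid_dissolve_iff {k : ℕ} (hN : A.neighborSet v = {x, y}) :
    IsContraction (triGrid k) (dissolve A v x y) ↔ IsContraction (triGrid k) A := by
  refine ⟨fun h => h.of_dissolve hN, fun ⟨σ, hσ⟩ => ?_⟩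
  rcases hσ.triGrid_map_eq_or hN with hvx | hvy
  · exact ⟨_, hσ.dissolve_comp_val hN hvx⟩
  · rw [dissolve_comm]
    exact ⟨_, hσ.dissolve_comp_val (Set.pair_comm x y ▸ hN) hvy⟩

end Dissolve

theorem bcg_congr {V V' : Type*} {G : SimpleGraph V} {G' : SimpleGraph V'}
    (h : ∀ k, IsContraction (triGrid k) G ↔ IsContraction (triGrid k) G') : bcg G = bcg G' :=
  congrArg sSup (Set.ext h)

theorem DissolveStep.bcg_eq {A B : BGraph} (h : DissolveStep A B) : bcg B.G = bcg A.G := by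
  obtain ⟨v, x, y, -, hN, ⟨e⟩⟩ := h
  exact bcg_congr fun k => (isContraction_congr e).trans (isContraction_triGrid_dissolve_iff hN)

/-- If `B` is a dissolution of `A`, then `bcg(B) = bcg(A)`. -/
theorem stmt_6 (A B : BGraph) (hd : IsDissolution A B) :
    bcg B.G = bcg A.G := by
  induction hd with
  | refl => rfl
  | tail _ hstep ih => exact hstep.bcg_eq.trans ih
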